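/- arXiv:2408.00745 — 2 statements merged into one kernel-verified Lean document; each statement's English description precedes it below -/
import Mathlib

section
/- For every integer n ≥ 2 and every subset T of {2,…,n−1} containing no two consecutive integers, we have the polynomial identity Σ_{S : T ⊆ S ⊆ {1,…,n−1}} φ_{S,n}(t) = t^{|T|} (1+t)^{n−1−2|T|} in ℤ[t]. -/
open Polynomial Finset

/-- `[m]_t = 1 + t + ⋯ + t^(m-1)`, with `[0]_t = 0`. -/
noncomputable def qnum (m : ℕ) : Polynomial ℤ := ∑ i ∈ Finset.range m, X ^ i

/-- Given the previous value `prev` and a (sorted) list `s₁, …, s_ℓ`, the product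
`[s₁ - prev - 1]_t · [s₂ - s₁ - 1]_t ⋯ [s_ℓ - s_{ℓ-1} - 1]_t`. -/
noncomputable def gapProd : ℕ → List ℕ → Polynomial ℤ
  | _, [] => 1
  | prev, s :: rest => qnum (s - prev - 1) * gapProd s rest

/-- `S` contains no two consecutive integers. -/
def NoTwoConsec (S : Finset ℕ) : Prop := ∀ i ∈ S, i + 1 ∉ S

instance (S : Finset ℕ) : Decidable (NoTwoConsec S) :=
  inferInstanceAs (Decidable (∀ i ∈ S, i + 1 ∉ S))

/-- The polynomial `φ_{S,n}(t) ∈ ℤ[t]`: it is `0` unless `S` is a subset of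
`[2, n-1]` with no two consecutive integers, in which case, writing
`S = {s₁ < … < s_ℓ}`, it equals
`t^ℓ [s₁-1]_t [s₂-s₁-1]_t ⋯ [s_ℓ-s_{ℓ-1}-1]_t` if `n-1 ∈ S`, and the same times
`[n - s_ℓ]_t` if `n-1 ∉ S` (in particular `φ_{∅,n} = [n]_t`). -/
noncomputable def phi (n : ℕ) (S : Finset ℕ) : Polynomial ℤ :=
  if S ⊆ Finset.Icc 2 (n - 1) ∧ NoTwoConsec S then
    X ^ S.card * gapProd 0 (S.sort (· ≤ ·)) *
      (if n - 1 ∈ S then 1 else qnum (n - S.sup id))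
  else 0

/-! Write `φ` with the uniform end factor `[n - max S]_t` and sum it over the stable sets
`S` with `T ⊆ S ⊆ [2, m]`, `n = m + 1`; induct on `m` by splitting on `m ∈ S`.
If `m ∈ T`, every such `S` contains `m` but not `m - 1`, and removing `m` costs one factor `t`
while passing from `n` to `n - 2`. If `m ∉ T`, apply `[k + 2]_t = (1 + t)[k + 1]_t - t [k]_t`
to the end factor of the sets avoiding `m`: the `-t` part is exactly cancelled by the sets
containing `m`, leaving `(1 + t)` times the sum for `n - 1`. -/

lemma qnum_succ (m : ℕ) : qnum (m + 1) = qnum m + X ^ m := by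
  simp [qnum, sum_range_succ]

lemma qnum_add_two (m : ℕ) : qnum (m + 2) = (1 + X) * qnum (m + 1) - X * qnum m := by
  rw [qnum_succ (m + 1), qnum_succ m]
  ring

lemma gapProd_append_singleton (prev a : ℕ) (l : List ℕ) :
    gapProd prev (l ++ [a]) = gapProd prev l * qnum (a - l.getLastD prev - 1) := by
  induction l generalizing prev with
  | nil => simp [gapProd]
  | cons s rest ih =>
    rw [List.cons_append, gapProd, gapProd, ih, List.getLastD_cons]
    ring

lemma sort_insert_of_forall_lt {S : Finset ℕ} {a : ℕ} (h : ∀ x ∈ S, x < a) :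
    (insert a S).sort (· ≤ ·) = S.sort (· ≤ ·) ++ [a] := by
  have hnodup : (S.sort (· ≤ ·) ++ [a]).Nodup := by
    simpa [List.nodup_append, sort_nodup] using fun x hx => (h x hx).ne
  have hsorted : (S.sort (· ≤ ·) ++ [a]).Pairwise (· ≤ ·) := by
    simpa [List.pairwise_append, pairwise_sort] using fun x hx => (h x hx).le
  have htoFinset : (S.sort (· ≤ ·) ++ [a]).toFinset = insert a S := by
    ext x
    simp
  rw [← htoFinset]
  exact (List.toFinset_sort _ hnodup).2 hsorted

lemma sup_id_insert_of_forall_lt {S : Finset ℕ} {a : ℕ} (h : ∀ x ∈ S, x < a) :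
    (insert a S).sup id = a := by
  simpa using fun x hx => (h x hx).le

lemma getLastD_sort_eq_sup (S : Finset ℕ) : (S.sort (· ≤ ·)).getLastD 0 = S.sup id := by
  induction S using Finset.induction_on_max with
  | empty => simp
  | insert a S h _ =>
    rw [sort_insert_of_forall_lt h, List.getLastD_concat, sup_id_insert_of_forall_lt h]

def stabSupersets (m : ℕ) (T : Finset ℕ) : Finset (Finset ℕ) :=
  (Icc 2 m).powerset.filter fun S => T ⊆ S ∧ NoTwoConsec S

lemma mem_stabSupersets {m : ℕ} {T S : Finset ℕ} :
    S ∈ stabSupersets m T ↔ S ⊆ Icc 2 m ∧ T ⊆ S ∧ NoTwoConsec S := by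
  simp [stabSupersets]

lemma filter_notMem_stabSupersets (m : ℕ) (T : Finset ℕ) :
    (stabSupersets (m + 1) T).filter (fun S => m + 1 ∉ S) = stabSupersets m T := by
  ext S
  simp only [mem_filter, mem_stabSupersets, subset_iff, mem_Icc]
  grind

lemma sum_stabSupersets_add_two (m : ℕ) (T : Finset ℕ) (f : Finset ℕ → Polynomial ℤ) :
    ∑ S ∈ stabSupersets (m + 2) T, f S =
      ∑ S ∈ stabSupersets (m + 1) T, f S +
        ∑ S ∈ stabSupersets m (T.erase (m + 2)), f (insert (m + 2) S) := by
  rw [← sum_filter_not_add_sum_filter _ (fun S => m + 2 ∈ S), filter_notMem_stabSupersets]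
  congr 1
  refine sum_nbij' (fun S => S.erase (m + 2)) (insert (m + 2)) ?_ ?_ ?_ ?_
    (fun S hS => by rw [insert_erase (mem_filter.1 hS).2]) <;>
    simp only [mem_filter, mem_stabSupersets, subset_iff, mem_Icc, NoTwoConsec, mem_erase,
      mem_insert] <;> grind

lemma stabSupersets_eq_empty {m a : ℕ} {T : Finset ℕ} (ha : a ∈ T) (hm : m < a) :
    stabSupersets m T = ∅ := by
  refine eq_empty_of_forall_notMem fun S hS => ?_
  obtain ⟨hS, hTS, -⟩ := mem_stabSupersets.1 hS
  have := mem_Icc.1 (hS (hTS ha))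
  omega

lemma NoTwoConsec.two_mul_card_le {m : ℕ} {T : Finset ℕ} (hT : NoTwoConsec T)
    (hTm : T ⊆ Icc 2 m) : 2 * T.card ≤ m := by
  have hdisj : Disjoint T (T.image (· + 1)) := by
    rw [disjoint_left]
    rintro _ hi hi'
    obtain ⟨j, hj, rfl⟩ := mem_image.1 hi'
    exact hT j hj hi
  have hsub : T ∪ T.image (· + 1) ⊆ Icc 2 (m + 1) := by
    intro x hx
    simp only [mem_union, mem_image] at hx
    rcases hx with hx | ⟨y, hy, rfl⟩
    · have := mem_Icc.1 (hTm hx); exact mem_Icc.2 ⟨this.1, by omega⟩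
    · have := mem_Icc.1 (hTm hy); exact mem_Icc.2 ⟨by omega, by omega⟩
  have := card_le_card hsub
  rw [card_union_of_disjoint hdisj, card_image_of_injective _ (add_left_injective 1),
    Nat.card_Icc] at this
  omega

/-- `φ_{S,n}` without the case split on `n - 1 ∈ S`, which only ever selects the factor
`[1]_t = 1`. Truncated subtraction makes it vanish as soon as `n ≤ max S`. -/
noncomputable def rawPhi (n : ℕ) (S : Finset ℕ) : Polynomial ℤ :=
  X ^ S.card * gapProd 0 (S.sort (· ≤ ·)) * qnum (n - S.sup id)

lemma phi_eq_rawPhi {n : ℕ} {S : Finset ℕ} (hS : S ⊆ Icc 2 (n - 1)) (hS' : NoTwoConsec S) :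
    phi n S = rawPhi n S := by
  rw [phi, if_pos ⟨hS, hS'⟩, rawPhi]
  split_ifs with hn
  · have hsup : S.sup id = n - 1 :=
      le_antisymm (Finset.sup_le fun x hx => (mem_Icc.1 (hS hx)).2) (le_sup (f := id) hn)
    have := mem_Icc.1 (hS hn)
    rw [hsup, show n - (n - 1) = 1 by omega]
    simp [qnum]
  · rfl

lemma rawPhi_eq_zero {n a : ℕ} {S : Finset ℕ} (ha : a ∈ S) (hn : n ≤ a) :
    rawPhi n S = 0 := by
  have : n - S.sup id = 0 := Nat.sub_eq_zero_of_le (hn.trans (le_sup (f := id) ha))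
  simp [rawPhi, this, qnum]

lemma rawPhi_add_two {n : ℕ} {S : Finset ℕ} (h : S.sup id ≤ n) :
    rawPhi (n + 2) S = (1 + X) * rawPhi (n + 1) S - X * rawPhi n S := by
  rw [rawPhi, rawPhi, rawPhi, show n + 2 - S.sup id = n - S.sup id + 2 by omega,
    show n + 1 - S.sup id = n - S.sup id + 1 by omega, qnum_add_two]
  ring

lemma rawPhi_insert {a : ℕ} {S : Finset ℕ} (h : ∀ x ∈ S, x < a) :
    rawPhi (a + 1) (insert a S) = X * rawPhi (a - 1) S := by
  have ha : a ∉ S := fun ha => (h a ha).false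
  rw [rawPhi, rawPhi, card_insert_of_notMem ha, sort_insert_of_forall_lt h,
    gapProd_append_singleton, getLastD_sort_eq_sup, sup_id_insert_of_forall_lt h,
    Nat.add_sub_cancel_left, Nat.sub_right_comm]
  simp only [qnum, range_one, sum_singleton, pow_zero, pow_succ]
  ring

noncomputable def phiSum (m : ℕ) (T : Finset ℕ) : Polynomial ℤ :=
  ∑ S ∈ stabSupersets m T, rawPhi (m + 1) S

lemma sum_stabSupersets_succ_rawPhi (m : ℕ) (T : Finset ℕ) :
    ∑ S ∈ stabSupersets (m + 1) T, rawPhi (m + 1) S = phiSum m T := by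
  rw [phiSum, ← filter_notMem_stabSupersets m T, sum_filter_of_ne]
  exact fun S _ hS hm => hS (rawPhi_eq_zero hm le_rfl)

lemma phiSum_add_two_of_mem {m : ℕ} {T : Finset ℕ} (h : m + 2 ∈ T) :
    phiSum (m + 2) T = X * phiSum m (T.erase (m + 2)) := by
  rw [phiSum, sum_stabSupersets_add_two, stabSupersets_eq_empty h (Nat.lt_succ_self _),
    sum_empty, zero_add, phiSum, mul_sum]
  refine sum_congr rfl fun S hS => rawPhi_insert fun x hx => ?_
  have := mem_Icc.1 ((mem_stabSupersets.1 hS).1 hx)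
  omega

lemma phiSum_add_two_of_notMem {m : ℕ} {T : Finset ℕ} (h : m + 2 ∉ T) :
    phiSum (m + 2) T = (1 + X) * phiSum (m + 1) T := by
  have hlow : ∑ S ∈ stabSupersets (m + 1) T, rawPhi (m + 3) S =
      (1 + X) * phiSum (m + 1) T - X * phiSum m T := by
    rw [phiSum, ← sum_stabSupersets_succ_rawPhi, mul_sum, mul_sum, ← sum_sub_distrib]
    exact sum_congr rfl fun S hS => rawPhi_add_two <|
      Finset.sup_le fun x hx => (mem_Icc.1 ((mem_stabSupersets.1 hS).1 hx)).2
  have htop : ∑ S ∈ stabSupersets m T, rawPhi (m + 3) (insert (m + 2) S) = X * phiSum m T := by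
    rw [phiSum, mul_sum]
    refine sum_congr rfl fun S hS => rawPhi_insert fun x hx => ?_
    have := mem_Icc.1 ((mem_stabSupersets.1 hS).1 hx)
    omega
  rw [phiSum, sum_stabSupersets_add_two, erase_eq_of_notMem h, hlow, htop]
  ring

theorem phiSum_eq {m : ℕ} {T : Finset ℕ} (hT : T ⊆ Icc 2 m) (hT' : NoTwoConsec T) :
    phiSum m T = X ^ T.card * (1 + X) ^ (m - 2 * T.card) := by
  induction m using Nat.strong_induction_on generalizing T with
  | _ m ih =>
  match m with
  | 0 | 1 =>
    obtain rfl : T = ∅ := subset_empty.1 (by simpa using hT)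
    simp [phiSum, rawPhi, gapProd, qnum, sum_range_succ, show stabSupersets 0 ∅ = {∅} by decide,
      show stabSupersets 1 ∅ = {∅} by decide]
  | m + 2 =>
    by_cases hm : m + 2 ∈ T
    · have hT'' : T.erase (m + 2) ⊆ Icc 2 m := by
        intro x hx
        obtain ⟨hx, hxT⟩ := mem_erase.1 hx
        have := mem_Icc.1 (hT hxT)
        have : x + 1 ≠ m + 2 := fun e => hT' x hxT (e ▸ hm)
        exact mem_Icc.2 ⟨by omega, by omega⟩
      rw [phiSum_add_two_of_mem hm, ih m (by omega) hT'' fun i hi hi' =>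
        hT' i (mem_of_mem_erase hi) (mem_of_mem_erase hi'), ← card_erase_add_one hm,
        show m + 2 - 2 * ((T.erase (m + 2)).card + 1) = m - 2 * (T.erase (m + 2)).card by omega]
      ring
    · have hT'' : T ⊆ Icc 2 (m + 1) := by
        intro x hx
        have := mem_Icc.1 (hT hx)
        have : x ≠ m + 2 := by rintro rfl; exact hm hx
        exact mem_Icc.2 ⟨by omega, by omega⟩
      have := hT'.two_mul_card_le hT''
      rw [phiSum_add_two_of_notMem hm, ih (m + 1) (by omega) hT'' hT',
        show m + 2 - 2 * T.card = m + 1 - 2 * T.card + 1 by omega]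
      ring

lemma sum_phi_eq_phiSum {n : ℕ} (hn : 1 ≤ n) (T : Finset ℕ) :
    ∑ S ∈ (Icc 1 (n - 1)).powerset.filter (fun S => T ⊆ S), phi n S = phiSum (n - 1) T := by
  have hsub : stabSupersets (n - 1) T ⊆ (Icc 1 (n - 1)).powerset.filter (fun S => T ⊆ S) :=
    fun S hS => by
      obtain ⟨hS, hTS, -⟩ := mem_stabSupersets.1 hS
      exact mem_filter.2 ⟨mem_powerset.2 (hS.trans (Icc_subset_Icc_left one_le_two)), hTS⟩
  rw [← sum_subset hsub, phiSum, Nat.sub_add_cancel hn]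
  · exact sum_congr rfl fun S hS => phi_eq_rawPhi (mem_stabSupersets.1 hS).1
      (mem_stabSupersets.1 hS).2.2
  · intro S hS hS'
    rw [phi, if_neg]
    exact fun ⟨h, h'⟩ => hS' (mem_stabSupersets.2 ⟨h, (mem_filter.1 hS).2, h'⟩)

/-- Lemma (Chow identity): for `n ≥ 2` and `T ∈ Stab([2, n-1])`,
`∑_{T ⊆ S ⊆ [1, n-1]} φ_{S,n}(t) = t^{|T|} (1+t)^{n-1-2|T|}`. -/
theorem phi_interval_sum (n : ℕ) (hn : 2 ≤ n) (T : Finset ℕ)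
    (hT1 : T ⊆ Finset.Icc 2 (n - 1)) (hT2 : NoTwoConsec T) :
    ∑ S ∈ (Finset.Icc 1 (n - 1)).powerset.filter (fun S => T ⊆ S), phi n S =
      X ^ T.card * (1 + X) ^ (n - 1 - 2 * T.card) := by
  rw [sum_phi_eq_phiSum (by omega), phiSum_eq hT1 hT2]
end

section
/- For every integer n ≥ 1 and every integer k ≥ 0, the two candidate γ-coefficients of the q-Eulerian polynomial agree: Σ q^{inv(σ)} summed over all σ ∈ S_n with exactly k descents whose descent set DES(σ) is a subset of {2,…,n−1} with no two consecutive integers (no double descents, no first descent) equals Σ q^{inv(σ)} summed over all σ ∈ S_n with exactly k descents whose descent set DES(σ) is a subset of {1,…,n−2} with no two consecutive integers (no double descents, no last descent). -/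
open Polynomial Finset

/-- `σ(i)` in one-line notation, as a value in `{1, …, n}` for `i ∈ {1, …, n}`
(and `0` for out-of-range `i`). -/
def pval {n : ℕ} (σ : Equiv.Perm (Fin n)) (i : ℕ) : ℕ :=
  if h : 1 ≤ i ∧ i ≤ n then (σ ⟨i - 1, by omega⟩ : ℕ) + 1 else 0

/-- The descent set `DES(σ) = {i ∈ {1,…,n-1} : σ(i) > σ(i+1)}`. -/
def pDES {n : ℕ} (σ : Equiv.Perm (Fin n)) : Finset ℕ :=
  (Finset.Icc 1 (n - 1)).filter fun i => pval σ (i + 1) < pval σ i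

/-- The major index `maj(σ) = Σ_{i ∈ DES(σ)} i`. -/
def pmaj {n : ℕ} (σ : Equiv.Perm (Fin n)) : ℕ := ∑ i ∈ pDES σ, i

/-- The excedance number `exc(σ) = #{i : σ(i) > i}`. -/
def pexc {n : ℕ} (σ : Equiv.Perm (Fin n)) : ℕ :=
  ((Finset.Icc 1 n).filter fun i => i < pval σ i).card

/-- The inversion number `inv(σ) = #{(i,j) : 1 ≤ i < j ≤ n, σ(i) > σ(j)}`. -/
def pinv {n : ℕ} (σ : Equiv.Perm (Fin n)) : ℕ :=
  (((Finset.Icc 1 n) ×ˢ (Finset.Icc 1 n)).filter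
    fun p => p.1 < p.2 ∧ pval σ p.2 < pval σ p.1).card

def rc {n : ℕ} (σ : Equiv.Perm (Fin n)) : Equiv.Perm (Fin n) :=
  Fin.revPerm * σ * Fin.revPerm

lemma rc_rc {n : ℕ} (σ : Equiv.Perm (Fin n)) : rc (rc σ) = σ := by
  simp [rc, mul_assoc]
  ext x
  simp [Equiv.Perm.mul_apply]

lemma pval_bounds {n : ℕ} (σ : Equiv.Perm (Fin n)) {i : ℕ} (h1 : 1 ≤ i) (h2 : i ≤ n) :
    1 ≤ pval σ i ∧ pval σ i ≤ n := by
  rw [pval, dif_pos ⟨h1, h2⟩]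
  have := (σ ⟨i - 1, by omega⟩).is_lt
  omega

lemma pval_rc {n : ℕ} (σ : Equiv.Perm (Fin n)) {i : ℕ} (h1 : 1 ≤ i) (h2 : i ≤ n) :
    pval (rc σ) i = n + 1 - pval σ (n + 1 - i) := by
  have h3 : 1 ≤ n + 1 - i ∧ n + 1 - i ≤ n := by omega
  rw [pval, pval, dif_pos ⟨h1, h2⟩, dif_pos h3]
  have hidx : (⟨n + 1 - i - 1, by omega⟩ : Fin n) = (⟨i - 1, by omega⟩ : Fin n).rev := by
    ext; simp [Fin.val_rev]; omega
  rw [hidx]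
  show ((Fin.revPerm (σ ((Fin.revPerm) ⟨i-1, by omega⟩))) : ℕ) + 1 = _
  simp only [Fin.revPerm_apply, Fin.val_rev]
  have := (σ (⟨i - 1, by omega⟩ : Fin n).rev).is_lt
  omega

lemma mem_pDES {n : ℕ} (σ : Equiv.Perm (Fin n)) {i : ℕ} (h : i ∈ pDES σ) :
    1 ≤ i ∧ i ≤ n - 1 := by
  simp [pDES, Finset.mem_filter, Finset.mem_Icc] at h; omega

lemma pDES_rc {n : ℕ} (σ : Equiv.Perm (Fin n)) :
    pDES (rc σ) = (pDES σ).image (fun i => n - i) := by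
  ext i
  simp only [pDES, Finset.mem_image, Finset.mem_filter, Finset.mem_Icc]
  constructor
  · rintro ⟨⟨h1, h2⟩, hd⟩
    refine ⟨n - i, ⟨⟨by omega, by omega⟩, ?_⟩, by omega⟩
    rw [pval_rc σ (by omega : 1 ≤ i) (by omega : i ≤ n),
        pval_rc σ (by omega : 1 ≤ i + 1) (by omega : i + 1 ≤ n)] at hd
    have hni : n - i + 1 = n + 1 - i := by omega
    have b1 := pval_bounds σ (show 1 ≤ n + 1 - i by omega) (show n + 1 - i ≤ n by omega)
    have b2 := pval_bounds σ (show 1 ≤ n + 1 - (i+1) by omega) (show n + 1 - (i+1) ≤ n by omega)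
    have hni2 : n - i = n + 1 - (i + 1) := by omega
    rw [hni, hni2]
    omega
  · rintro ⟨j, ⟨⟨hj1, hj2⟩, hd⟩, rfl⟩
    have h1 : 1 ≤ n - j := by omega
    have h2 : n - j ≤ n - 1 := by omega
    refine ⟨⟨h1, h2⟩, ?_⟩
    rw [pval_rc σ (by omega : 1 ≤ n - j) (by omega : n - j ≤ n),
        pval_rc σ (by omega : 1 ≤ n - j + 1) (by omega : n - j + 1 ≤ n)]
    have e1 : n + 1 - (n - j + 1) = j := by omega
    have e2 : n + 1 - (n - j) = j + 1 := by omega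
    rw [e1, e2]
    have b1 := pval_bounds σ (show 1 ≤ j by omega) (show j ≤ n by omega)
    have b2 := pval_bounds σ (show 1 ≤ j + 1 by omega) (show j + 1 ≤ n by omega)
    omega

lemma pinv_rc {n : ℕ} (σ : Equiv.Perm (Fin n)) : pinv (rc σ) = pinv σ := by
  unfold pinv
  apply Finset.card_bij' (fun p _ => (n + 1 - p.2, n + 1 - p.1))
    (fun p _ => (n + 1 - p.2, n + 1 - p.1))
  · rintro ⟨a, b⟩ h
    simp only [Finset.mem_filter, Finset.mem_product, Finset.mem_Icc] at h ⊢
    obtain ⟨⟨⟨ha1, ha2⟩, hb1, hb2⟩, hab, hinv⟩ := h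
    rw [pval_rc σ ha1 ha2, pval_rc σ hb1 hb2] at hinv
    have b1 := pval_bounds σ (show 1 ≤ n + 1 - a by omega) (show n + 1 - a ≤ n by omega)
    have b2 := pval_bounds σ (show 1 ≤ n + 1 - b by omega) (show n + 1 - b ≤ n by omega)
    exact ⟨⟨⟨by omega, by omega⟩, by omega, by omega⟩, by omega, by omega⟩
  · rintro ⟨a, b⟩ h
    simp only [Finset.mem_filter, Finset.mem_product, Finset.mem_Icc] at h ⊢
    obtain ⟨⟨⟨ha1, ha2⟩, hb1, hb2⟩, hab, hinv⟩ := h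
    have c1 : 1 ≤ n + 1 - b ∧ n + 1 - b ≤ n := by omega
    have c2 : 1 ≤ n + 1 - a ∧ n + 1 - a ≤ n := by omega
    rw [pval_rc σ c2.1 c2.2, pval_rc σ c1.1 c1.2]
    have e1 : n + 1 - (n + 1 - a) = a := by omega
    have e2 : n + 1 - (n + 1 - b) = b := by omega
    rw [e1, e2]
    have b1 := pval_bounds σ ha1 ha2
    have b2 := pval_bounds σ hb1 hb2
    exact ⟨⟨⟨by omega, by omega⟩, by omega, by omega⟩, by omega, by omega⟩
  · rintro ⟨a, b⟩ h
    simp only [Finset.mem_filter, Finset.mem_product, Finset.mem_Icc] at h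
    simp only [Prod.mk.injEq]
    omega
  · rintro ⟨a, b⟩ h
    simp only [Finset.mem_filter, Finset.mem_product, Finset.mem_Icc] at h
    simp only [Prod.mk.injEq]
    omega

lemma cond_rc {n : ℕ} (hn : 1 ≤ n) (σ : Equiv.Perm (Fin n)) :
    (pDES (rc σ) ⊆ Finset.Icc 2 (n - 1) ∧ NoTwoConsec (pDES (rc σ)) ∧ (pDES (rc σ)).card = k)
    ↔ (pDES σ ⊆ Finset.Icc 1 (n - 2) ∧ NoTwoConsec (pDES σ) ∧ (pDES σ).card = k) := by
  rw [pDES_rc]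
  have hinj : Set.InjOn (fun i => n - i) (pDES σ) := by
    intro a ha b hb hab
    have := mem_pDES σ ha; have := mem_pDES σ hb
    simp at hab; omega
  constructor
  · rintro ⟨hsub, hcons, hcard⟩
    refine ⟨?_, ?_, ?_⟩
    · intro i hi
      have hb := mem_pDES σ hi
      have : n - i ∈ Finset.Icc 2 (n - 1) :=
        hsub (Finset.mem_image_of_mem _ hi)
      simp only [Finset.mem_Icc] at this ⊢
      omega
    · intro i hi hip
      have hb := mem_pDES σ hi
      have hbp := mem_pDES σ hip
      have h1 : n - (i + 1) ∈ (pDES σ).image (fun i => n - i) :=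
        Finset.mem_image_of_mem _ hip
      have h2 : n - (i + 1) + 1 ∈ (pDES σ).image (fun i => n - i) := by
        have : n - (i + 1) + 1 = n - i := by omega
        rw [this]
        exact Finset.mem_image_of_mem _ hi
      exact hcons _ h1 h2
    · rw [← hcard, Finset.card_image_of_injOn hinj]
  · rintro ⟨hsub, hcons, hcard⟩
    refine ⟨?_, ?_, ?_⟩
    · intro j hj
      simp only [Finset.mem_image] at hj
      obtain ⟨i, hi, rfl⟩ := hj
      have hb := mem_pDES σ hi
      have := hsub hi
      simp only [Finset.mem_Icc] at this ⊢
      omega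
    · intro j hj hjp
      simp only [Finset.mem_image] at hj hjp
      obtain ⟨i, hi, rfl⟩ := hj
      obtain ⟨i', hi', he⟩ := hjp
      have hb := mem_pDES σ hi
      have hb' := mem_pDES σ hi'
      have : i = i' + 1 := by omega
      exact hcons i' hi' (this ▸ hi)
    · rw [Finset.card_image_of_injOn hinj, hcard]

/-- The two candidate γ-coefficients of the `q`-Eulerian polynomial agree:
summing `q^{inv(σ)}` over `σ ∈ S_n` with `k` descents, no two consecutive
descents and no first descent gives the same polynomial as summing over those
with `k` descents, no two consecutive descents and no last descent. -/
theorem xi_noFirst_eq_xi_noLast (n k : ℕ) (hn : 1 ≤ n) :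
    (∑ σ ∈ Finset.univ.filter
        (fun σ : Equiv.Perm (Fin n) =>
          pDES σ ⊆ Finset.Icc 2 (n - 1) ∧ NoTwoConsec (pDES σ) ∧ (pDES σ).card = k),
      (Polynomial.X : Polynomial ℤ) ^ pinv σ) =
    ∑ σ ∈ Finset.univ.filter
        (fun σ : Equiv.Perm (Fin n) =>
          pDES σ ⊆ Finset.Icc 1 (n - 2) ∧ NoTwoConsec (pDES σ) ∧ (pDES σ).card = k),
      (Polynomial.X : Polynomial ℤ) ^ pinv σ := by
  refine Finset.sum_nbij' (fun σ => rc σ) (fun σ => rc σ) ?_ ?_ ?_ ?_ ?_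
  · intro σ hσ
    simp only [Finset.mem_filter, Finset.mem_univ, true_and] at hσ ⊢
    have h := cond_rc (k := k) hn (rc σ)
    rw [rc_rc] at h
    exact h.mp hσ
  · intro σ hσ
    simp only [Finset.mem_filter, Finset.mem_univ, true_and] at hσ ⊢
    exact (cond_rc (k := k) hn σ).mpr hσ
  · intro σ _; exact rc_rc σ
  · intro σ _; exact rc_rc σ
  · intro σ _; rw [pinv_rc]
end
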